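/- Quantum teleportation in dimension d (pure-state version): for every d ≥ 1, every m, n ∈ {0, 1, ..., d−1}, and every vector φ ∈ ℂᵈ, one has (Xᵐ Zⁿ) · ((⟨Φ_{mn}| ⊗ I_d)(φ ⊗ |Φ_d⟩)) = (1/d) φ; that is, after Alice performs the generalized Bell measurement on her input state and her half of a shared maximally entangled state and obtains outcome (m,n), Bob recovers φ by applying the correction unitary Xᵐ Zⁿ. -/
import Mathlib


open Matrix Kronecker

/-- The d×d shift matrix `X`, with `X e_j = e_{(j+1) mod d}`. -/
def shiftX (d : ℕ) : Matrix (Fin d) (Fin d) ℂ :=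
  Matrix.of fun i j => if (i : ℕ) = ((j : ℕ) + 1) % d then 1 else 0

/-- The d×d clock matrix `Z`, with `Z e_j = ω^j e_j`, `ω = exp(2πi/d)`. -/
noncomputable def clockZ (d : ℕ) : Matrix (Fin d) (Fin d) ℂ :=
  Matrix.of fun i j =>
    if i = j then Complex.exp (2 * Real.pi * Complex.I * (j : ℕ) / d) else 0


lemma sum_delta (d : ℕ) (a b : ℕ) (ha : a < d) :
    (∑ i : Fin d, (if (i:ℕ) = a then (1:ℂ) else 0) * (if (i:ℕ) = b then 1 else 0))
      = if a = b then 1 else 0 := by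
  rw [Finset.sum_eq_single (⟨a, ha⟩ : Fin d)]
  · by_cases h : a = b <;> simp [h]
  · intro i _ hi
    have : (i:ℕ) ≠ a := fun h => hi (Fin.ext h)
    simp [this]
  · simp

lemma shiftX_mem : ∀ d, shiftX d ∈ unitary (Matrix (Fin d) (Fin d) ℂ) := by
  intro d
  rw [Unitary.mem_iff]
  have h : star (shiftX d) * shiftX d = 1 := by
    ext j k
    simp only [Matrix.mul_apply, Matrix.star_apply, conjTranspose_apply, shiftX,
      Matrix.of_apply, one_apply, apply_ite star, star_one, star_zero]
    rw [sum_delta d _ _ (Nat.mod_lt _ j.pos)]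
    have : ((j:ℕ)+1) % d = ((k:ℕ)+1) % d ↔ j = k := by
      constructor
      · intro h
        have hmod : (j:ℕ) % d = (k:ℕ) % d := Nat.ModEq.add_right_cancel' 1 h
        rw [Nat.mod_eq_of_lt j.is_lt, Nat.mod_eq_of_lt k.is_lt] at hmod
        exact Fin.ext hmod
      · rintro rfl; rfl
    by_cases h : j = k <;> simp [h, this]
  exact ⟨h, mul_eq_one_comm.mp h⟩

lemma clockZ_mem : ∀ d, clockZ d ∈ unitary (Matrix (Fin d) (Fin d) ℂ) := by
  intro d
  rw [Unitary.mem_iff]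
  have hz : ∀ j : Fin d, star (Complex.exp (2 * Real.pi * Complex.I * (j : ℕ) / d))
      * Complex.exp (2 * Real.pi * Complex.I * (j : ℕ) / d) = 1 := by
    intro j
    rw [Complex.star_def, ← Complex.exp_conj, ← Complex.exp_add]
    have : (starRingEnd ℂ) (2 * Real.pi * Complex.I * (j : ℕ) / d)
        = -(2 * Real.pi * Complex.I * (j : ℕ) / d) := by
      simp only [map_div₀, _root_.map_mul, Complex.conj_I, Complex.conj_ofReal, map_natCast,
        map_ofNat]
      ring
    rw [this, neg_add_cancel, Complex.exp_zero]
  have h : star (clockZ d) * clockZ d = 1 := by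
    ext j k
    simp only [Matrix.mul_apply, Matrix.star_apply, conjTranspose_apply, clockZ,
      Matrix.of_apply, one_apply, apply_ite star, star_zero]
    rw [Finset.sum_eq_single j]
    · by_cases h : j = k
      · subst h; simpa [Complex.star_def] using hz j
      · simp [h, Ne.symm h]
    · intro i _ hi; simp [hi]
    · simp
  exact ⟨h, mul_eq_one_comm.mp h⟩

/-- The maximally entangled state `|Φ_d⟩ = (1/√d) Σ_j e_j ⊗ e_j ∈ ℂᵈ⊗ℂᵈ`. -/
noncomputable def maxEnt (d : ℕ) : Fin d × Fin d → ℂ :=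
  fun p => if p.1 = p.2 then (((Real.sqrt d : ℝ) : ℂ))⁻¹ else 0

/-- The generalized Bell vector `|Φ_{mn}⟩ = ((Xᵐ Zⁿ) ⊗ I_d)|Φ_d⟩`. -/
noncomputable def bellVec (d : ℕ) (m n : Fin d) : Fin d × Fin d → ℂ :=
  ((shiftX d ^ (m : ℕ) * clockZ d ^ (n : ℕ)) ⊗ₖ (1 : Matrix (Fin d) (Fin d) ℂ)) *ᵥ maxEnt d

/-- The bra `⟨Φ_{mn}|`, as a 1×d² matrix. -/
noncomputable def braBell (d : ℕ) (m n : Fin d) : Matrix (Fin 1) (Fin d × Fin d) ℂ :=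
  Matrix.of fun _ p => star (bellVec d m n p)


lemma bellVec_apply (d : ℕ) (m n a b : Fin d) :
    bellVec d m n (a, b)
      = (shiftX d ^ (m:ℕ) * clockZ d ^ (n:ℕ)) a b * (((Real.sqrt d : ℝ):ℂ))⁻¹ := by
  simp only [bellVec, Matrix.mulVec, dotProduct, Fintype.sum_prod_type,
    kroneckerMap_apply, maxEnt, one_apply]
  simp [mul_ite, ite_mul, mul_zero, zero_mul, mul_one, Finset.sum_ite_eq, Finset.sum_ite_eq']

/-- quantum teleportation, pure-state version: for every `d ≥ 1`,
`m, n ∈ {0,…,d−1}`, and `φ ∈ ℂᵈ`,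
`(Xᵐ Zⁿ) · ((⟨Φ_{mn}| ⊗ I_d)(φ ⊗ |Φ_d⟩)) = (1/d) φ`.
Here `⟨Φ_{mn}| ⊗ I_d` is the Kronecker product of the bra (a 1×d² matrix) with `I_d`,
acting on the vector `φ ⊗ |Φ_d⟩ ∈ ℂᵈ ⊗ (ℂᵈ ⊗ ℂᵈ)`. -/
theorem stmt_6 (d : ℕ) (hd : 1 ≤ d) (m n : Fin d) (φ : Fin d → ℂ) :
    (shiftX d ^ (m : ℕ) * clockZ d ^ (n : ℕ)) *ᵥ
      (fun i : Fin d =>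
        ((braBell d m n ⊗ₖ (1 : Matrix (Fin d) (Fin d) ℂ)) *ᵥ
          (fun q : (Fin d × Fin d) × Fin d => φ q.1.1 * maxEnt d (q.1.2, q.2)))
        (⟨0, Nat.one_pos⟩, i))
      = ((d : ℂ))⁻¹ • φ := by
  have hU : (shiftX d ^ (m:ℕ) * clockZ d ^ (n:ℕ)) ∈ unitary (Matrix (Fin d) (Fin d) ℂ) :=
    mul_mem (pow_mem (shiftX_mem d) _) (pow_mem (clockZ_mem d) _)
  set U := shiftX d ^ (m:ℕ) * clockZ d ^ (n:ℕ) with hUdef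
  have h1 : U * star U = 1 := (Unitary.mem_iff.mp hU).2
  have hs : (((Real.sqrt d : ℝ):ℂ))⁻¹ * (((Real.sqrt d : ℝ):ℂ))⁻¹ = ((d:ℂ))⁻¹ := by
    rw [← mul_inv, ← Complex.ofReal_mul, Real.mul_self_sqrt (Nat.cast_nonneg d),
      Complex.ofReal_natCast]
  have hfun : (fun i : Fin d =>
        ((braBell d m n ⊗ₖ (1 : Matrix (Fin d) (Fin d) ℂ)) *ᵥ
          (fun q : (Fin d × Fin d) × Fin d => φ q.1.1 * maxEnt d (q.1.2, q.2)))
        (⟨0, Nat.one_pos⟩, i))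
      = ((d:ℂ))⁻¹ • ((star U) *ᵥ φ) := by
    funext i
    simp only [Matrix.mulVec, dotProduct, Fintype.sum_prod_type, kroneckerMap_apply,
      braBell, Matrix.of_apply, bellVec_apply, one_apply, maxEnt, Pi.smul_apply, smul_eq_mul,
      Matrix.star_apply, Matrix.conjTranspose_apply]
    simp only [star_mul', star_inv₀, Complex.star_def, Complex.conj_ofReal, mul_ite, ite_mul,
      mul_zero, zero_mul, mul_one, one_mul, Finset.sum_ite_eq, Finset.sum_ite_eq',
      Finset.mem_univ, if_true]
    rw [Finset.mul_sum]
    refine Finset.sum_congr rfl fun a _ => ?_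
    rw [hUdef, ← hs]
    ring
  rw [hfun, Matrix.mulVec_smul, Matrix.mulVec_mulVec, h1, Matrix.one_mulVec]
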